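/- arXiv:1708.05351 — 2 statements merged into one kernel-verified Lean document; each statement's English description precedes it below -/
import Mathlib

section
/- L1-scheme error constant: for 0 < α < 1, the constant (1/Γ(2−α))[(1−α)/12 + 2^{2−α}/(2−α) − (1 + 2^{−α})] is positive. -/
theorem l1_error_constant_pos (α : ℝ) (hα0 : 0 < α) (hα1 : α < 1) :
    0 < (1 / Real.Gamma (2 - α)) *
        ((1 - α) / 12 + (2 : ℝ) ^ (2 - α) / (2 - α) - (1 + (2 : ℝ) ^ (-α))) := by
  have h2α : (0:ℝ) < 2 - α := by linarith
  have hΓ : 0 < Real.Gamma (2 - α) := Real.Gamma_pos_of_pos h2α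
  have hb : (2:ℝ) ^ α ≤ 1 + α := by
    have := rpow_one_add_le_one_add_mul_self (s := 1) (p := α) (by norm_num)
      hα0.le hα1.le
    norm_num at this; exact this
  set t : ℝ := (2:ℝ) ^ (-α) with ht
  have ht0 : 0 < t := Real.rpow_pos_of_pos (by norm_num) _
  have htinv : t * (2:ℝ) ^ α = 1 := by
    rw [ht, ← Real.rpow_add (by norm_num)]; simp
  have hkey : 1 ≤ t * (1 + α) := by
    calc 1 = t * (2:ℝ) ^ α := htinv.symm
    _ ≤ t * (1 + α) := by nlinarith
  have hsplit : (2:ℝ) ^ (2 - α) = 4 * t := by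
    have : (2:ℝ) ^ (2 - α) = (2:ℝ) ^ (2:ℝ) * (2:ℝ) ^ (-α) := by
      rw [← Real.rpow_add (by norm_num : (0:ℝ) < 2)]; ring_nf
    rw [this, ht, show ((2:ℝ)^(2:ℝ)) = 4 by
      rw [show ((2:ℝ)^(2:ℝ)) = (2:ℝ)^((2:ℕ):ℝ) by norm_num, Real.rpow_natCast]
      norm_num]
  rw [hsplit]
  have hbr : 0 < (1 - α) / 12 + 4 * t / (2 - α) - (1 + t) := by
    have heq : (1 - α) / 12 + 4 * t / (2 - α) - (1 + t)
        = ((1 - α) * (2 - α) + 48 * t - 12 * (1 + t) * (2 - α)) / (12 * (2 - α)) := by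
      field_simp
      ring
    rw [heq]
    apply div_pos _ (by positivity)
    nlinarith [sq_nonneg α, sq_nonneg (1 - α), mul_pos ht0 hα0]
  positivity
end

section
/- Let Ω = [a,b] be a bounded interval and 0 < μ < 1. Then for u ∈ C¹ with u(a)=0, ‖u‖_{L²(Ω)} ≤ ((b−a)^μ/Γ(μ+1)) ‖ᶜD^μ_a u‖_{L²(Ω)}, where ᶜD^μ_a is the left Caputo derivative of order μ based at a. -/
open MeasureTheory Set Function
open scoped ENNReal NNReal



lemma rpow_ii (q x y : ℝ) (hq : -1 < q) :
    IntervalIntegrable (fun t => (y - t) ^ q) volume x y := by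
  have h := (intervalIntegral.intervalIntegrable_rpow' (a := 0) (b := y - x) hq).comp_sub_left y
  simpa using h.symm

lemma rpow_io (q x y : ℝ) (hq : -1 < q) (hxy : x ≤ y) :
    IntegrableOn (fun t => (y - t) ^ q) (Set.Ioc x y) volume :=
  (intervalIntegrable_iff_integrableOn_Ioc_of_le hxy).mp (rpow_ii q x y hq)

lemma rpow_val (q : ℝ) (hq : -1 < q) (x y : ℝ) :
    ∫ t in x..y, (y - t) ^ q = (y - x) ^ (q+1) / (q+1) := by
  have h := intervalIntegral.integral_comp_sub_left (a := x) (b := y) (fun t => t ^ q) y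
  rw [h, sub_self, integral_rpow (Or.inl hq),
    Real.zero_rpow (by linarith), sub_zero]

lemma rpow_ii2 (q x y : ℝ) (hq : -1 < q) :
    IntervalIntegrable (fun t => (t - x) ^ q) volume x y := by
  have h := (intervalIntegral.intervalIntegrable_rpow' (a := 0) (b := y - x) hq).comp_sub_right x
  simp only [zero_add, sub_add_cancel] at h
  simpa using h

lemma rpow_io2 (q x y : ℝ) (hq : -1 < q) (hxy : x ≤ y) :
    IntegrableOn (fun t => (t - x) ^ q) (Set.Ioc x y) volume :=
  (intervalIntegrable_iff_integrableOn_Ioc_of_le hxy).mp (rpow_ii2 q x y hq)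

lemma rpow_val2 (q : ℝ) (hq : -1 < q) (x y : ℝ) :
    ∫ t in x..y, (t - x) ^ q = (y - x) ^ (q+1) / (q+1) := by
  have h := intervalIntegral.integral_comp_sub_right (a := x) (b := y) (fun t => t ^ q) x
  rw [h, sub_self, integral_rpow (Or.inl hq),
    Real.zero_rpow (by linarith), sub_zero]



lemma beta_aux (μ : ℝ) (hμ0 : 0 < μ) (hμ1 : μ < 1) :
    ∫ τ in (0:ℝ)..1, τ ^ (-μ) * (1-τ) ^ (μ-1) = Real.Gamma μ * Real.Gamma (1-μ) := by
  have h1 : (0:ℝ) < 1 - μ := by linarith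
  have hc := Complex.Gamma_mul_Gamma_eq_betaIntegral (s := ((1-μ:ℝ):ℂ)) (t := ((μ:ℝ):ℂ))
    (by simpa using h1) (by simpa using hμ0)
  have hsum : ((1-μ:ℝ):ℂ) + ((μ:ℝ):ℂ) = 1 := by push_cast; ring
  rw [hsum, Complex.Gamma_one, one_mul] at hc
  have hre : Complex.betaIntegral ((1-μ:ℝ):ℂ) ((μ:ℝ):ℂ)
      = ((∫ τ in (0:ℝ)..1, τ ^ (-μ) * (1-τ) ^ (μ-1) : ℝ) : ℂ) := by
    rw [Complex.betaIntegral, ← intervalIntegral.integral_ofReal]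
    apply intervalIntegral.integral_congr
    intro x hx
    rw [Set.uIcc_of_le (by norm_num : (0:ℝ) ≤ 1)] at hx
    obtain ⟨hx0, hx1⟩ := hx
    have e1 : ((1-μ:ℝ):ℂ) - 1 = ((-μ : ℝ):ℂ) := by push_cast; ring
    have e2 : ((μ:ℝ):ℂ) - 1 = ((μ - 1 : ℝ):ℂ) := by push_cast; ring
    have e3 : (1 : ℂ) - (x:ℂ) = ((1 - x : ℝ):ℂ) := by push_cast; ring
    simp only []
    rw [e1, e3, e2, ← Complex.ofReal_cpow hx0, ← Complex.ofReal_cpow (by linarith)]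
    push_cast
    ring
  rw [hre] at hc
  have h2 : ((Real.Gamma (1-μ) * Real.Gamma μ : ℝ) : ℂ)
      = ((∫ τ in (0:ℝ)..1, τ ^ (-μ) * (1-τ) ^ (μ-1) : ℝ) : ℂ) := by
    rw [← hc, Complex.ofReal_mul, Complex.Gamma_ofReal, Complex.Gamma_ofReal]
  have := Complex.ofReal_injective h2
  rw [← this]; ring



lemma beta_tx (μ : ℝ) (hμ0 : 0 < μ) (hμ1 : μ < 1)
    (hbeta : ∫ τ in (0:ℝ)..1, τ ^ (-μ) * (1-τ) ^ (μ-1) = Real.Gamma μ * Real.Gamma (1-μ))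
    (t x : ℝ) (htx : t < x) :
    ∫ s in t..x, (x-s) ^ (μ-1) * (s-t) ^ (-μ) = Real.Gamma μ * Real.Gamma (1-μ) := by
  set c := x - t with hc
  have hcpos : 0 < c := by simp [hc]; linarith
  have key := intervalIntegral.integral_comp_mul_add
    (a := (0:ℝ)) (b := 1) (f := fun s => (x-s) ^ (μ-1) * (s-t) ^ (-μ)) (ne_of_gt hcpos) t
  simp only [mul_zero, zero_add, mul_one] at key
  have hend : c + t = x := by simp [hc]
  rw [hend] at key
  -- key : ∫ τ in 0..1, (x - (c*τ+t))^(μ-1) * ((c*τ+t)-t)^(-μ) = c⁻¹ • ∫ s in t..x, ...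
  have lhs_eq : (∫ τ in (0:ℝ)..1, (x - (c*τ+t)) ^ (μ-1) * ((c*τ+t)-t) ^ (-μ))
      = c⁻¹ * (Real.Gamma μ * Real.Gamma (1-μ)) := by
    rw [← hbeta, ← intervalIntegral.integral_const_mul]
    apply intervalIntegral.integral_congr
    intro τ hτ
    rw [Set.uIcc_of_le (by norm_num : (0:ℝ) ≤ 1)] at hτ
    obtain ⟨h0, h1⟩ := hτ
    simp only []
    have e1 : x - (c*τ+t) = c * (1 - τ) := by rw [hc]; ring
    have e2 : c*τ+t-t = c * τ := by ring
    rw [e1, e2, Real.mul_rpow (le_of_lt hcpos) (by linarith),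
      Real.mul_rpow (le_of_lt hcpos) h0]
    have : c ^ (μ-1) * c ^ (-μ) = c⁻¹ := by
      rw [← Real.rpow_add hcpos, show μ-1+-μ = -1 by ring, Real.rpow_neg_one]
    calc c ^ (μ-1) * (1-τ) ^ (μ-1) * (c ^ (-μ) * τ ^ (-μ))
        = (c ^ (μ-1) * c ^ (-μ)) * (τ ^ (-μ) * (1-τ) ^ (μ-1)) := by ring
      _ = c⁻¹ * (τ ^ (-μ) * (1-τ) ^ (μ-1)) := by rw [this]
  rw [lhs_eq, smul_eq_mul] at key
  have := mul_left_cancel₀ (inv_ne_zero (ne_of_gt hcpos)) key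
  exact this.symm



lemma tri_swap (a c p q : ℝ) (hac : a < c) (hp1 : -1 < p) (hq1 : -1 < q)
    (w : ℝ → ℝ) (hw : AEStronglyMeasurable w (volume.restrict (Set.Ioc a c)))
    (M : ℝ) (hM : ∀ t ∈ Set.Ioc a c, |w t| ≤ M) :
    ((∫ s in a..c, (c-s) ^ p * ∫ t in a..s, (s-t) ^ q * w t)
      = ∫ t in a..c, (∫ s in t..c, (c-s) ^ p * (s-t) ^ q) * w t)
    ∧ IntegrableOn (fun s => (c-s) ^ p * ∫ t in a..s, (s-t) ^ q * w t) (Set.Ioc a c) volume := by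
  have hM0 : 0 ≤ M := le_trans (abs_nonneg _) (hM ((a+c)/2) ⟨by linarith, by linarith⟩)
  set ν := volume.restrict (Set.Ioc a c) with hν
  set f : ℝ → ℝ → ℝ := fun s t =>
    Set.indicator {z : ℝ × ℝ | z.2 ≤ z.1} (fun z => (c-z.1) ^ p * ((z.1-z.2) ^ q * w z.2)) (s, t)
    with hf
  -- pointwise description for fixed s
  have hfs : ∀ s t, f s t = Set.indicator (Set.Iic s)
      (fun t => (c-s) ^ p * ((s-t) ^ q * w t)) t := by
    intro s t
    simp only [hf]
    by_cases h : t ≤ s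
    · rw [Set.indicator_of_mem (by exact h : (s,t) ∈ {z : ℝ × ℝ | z.2 ≤ z.1}),
        Set.indicator_of_mem (by exact h)]
    · rw [Set.indicator_of_notMem (by exact h), Set.indicator_of_notMem (by exact h)]
  have hft : ∀ t s, f s t = Set.indicator (Set.Ici t)
      (fun s => (c-s) ^ p * ((s-t) ^ q * w t)) s := by
    intro t s
    simp only [hf]
    by_cases h : t ≤ s
    · rw [Set.indicator_of_mem (by exact h : (s,t) ∈ {z : ℝ × ℝ | z.2 ≤ z.1}),
        Set.indicator_of_mem (by exact h)]
    · rw [Set.indicator_of_notMem (by exact h), Set.indicator_of_notMem (by exact h)]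
  -- measurability
  have hmeas : AEStronglyMeasurable (uncurry f) (ν.prod ν) := by
    have hset : MeasurableSet {z : ℝ × ℝ | z.2 ≤ z.1} :=
      measurableSet_le measurable_snd measurable_fst
    have h1 : AEStronglyMeasurable (fun z : ℝ × ℝ => (c-z.1) ^ p * ((z.1-z.2) ^ q * w z.2))
        (ν.prod ν) := by
      apply AEStronglyMeasurable.mul
      · exact (Measurable.aestronglyMeasurable (by fun_prop))
      · apply AEStronglyMeasurable.mul
        · exact (Measurable.aestronglyMeasurable (by fun_prop))
        · exact hw.comp_snd
    have : uncurry f = Set.indicator {z : ℝ × ℝ | z.2 ≤ z.1}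
        (fun z => (c-z.1) ^ p * ((z.1-z.2) ^ q * w z.2)) := by
      funext z
      rw [uncurry, hf]
    rw [this]
    exact h1.indicator hset
  -- a.e. wrt restricted measure facts
  have hsub : ∀ s, s ∈ Set.Ioc a c → Set.Iic s ∩ Set.Ioc a c = Set.Ioc a s := by
    intro s hs
    rw [Set.inter_comm, Set.Ioc_inter_Iic, min_eq_right hs.2]
  -- integrability of slices
  have hslice : ∀ s ∈ Set.Ioc a c, Integrable (f s) ν := by
    intro s hs
    have : f s = Set.indicator (Set.Iic s) (fun t => (c-s) ^ p * ((s-t) ^ q * w t)) :=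
      funext (hfs s)
    rw [this, hν, integrable_indicator_iff measurableSet_Iic]
    rw [IntegrableOn, Measure.restrict_restrict measurableSet_Iic, hsub s hs]
    apply Integrable.const_mul
    have hwm : AEStronglyMeasurable w (volume.restrict (Set.Ioc a s)) :=
      hw.mono_measure (Measure.restrict_mono (Set.Ioc_subset_Ioc_right hs.2) le_rfl)
    have hbd : ∀ᵐ t ∂(volume.restrict (Set.Ioc a s)), ‖w t‖ ≤ M := by
      rw [ae_restrict_iff' measurableSet_Ioc]
      exact Filter.Eventually.of_forall fun t ht =>
        hM t ⟨ht.1, le_trans ht.2 hs.2⟩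
    have := (rpow_io q a s hq1 (hs.1.le)).bdd_mul (c := M) hwm hbd
    exact this.congr (Filter.Eventually.of_forall fun t => by ring)
  have hslice_ae : ∀ᵐ s ∂ν, Integrable (f s) ν := by
    rw [hν, ae_restrict_iff' measurableSet_Ioc]
    exact Filter.Eventually.of_forall hslice
  -- the norm-integral function and its bound
  have hslice_val : ∀ s ∈ Set.Ioc a c,
      (∫ t, f s t ∂ν) = (c-s) ^ p * ∫ t in a..s, (s-t) ^ q * w t := by
    intro s hs
    have : f s = Set.indicator (Set.Iic s) (fun t => (c-s) ^ p * ((s-t) ^ q * w t)) :=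
      funext (hfs s)
    rw [this, hν, integral_indicator measurableSet_Iic,
      Measure.restrict_restrict measurableSet_Iic, hsub s hs,
      ← intervalIntegral.integral_of_le hs.1.le,
      intervalIntegral.integral_const_mul]
  have hnorm_bound : ∀ s ∈ Set.Ioc a c,
      (∫ t, ‖f s t‖ ∂ν) ≤ (M * ((c-a) ^ (q+1) / (q+1))) * (c-s) ^ p := by
    intro s hs
    have has : a ≤ s := hs.1.le
    have h1 : (∫ t, ‖f s t‖ ∂ν) = ∫ t in Set.Ioc a s, ‖(c-s) ^ p * ((s-t) ^ q * w t)‖ := by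
      have : (fun t => ‖f s t‖) = Set.indicator (Set.Iic s)
          (fun t => ‖(c-s) ^ p * ((s-t) ^ q * w t)‖) := by
        funext t
        rw [hfs s t, norm_indicator_eq_indicator_norm]
      rw [this, hν, integral_indicator measurableSet_Iic,
        Measure.restrict_restrict measurableSet_Iic, hsub s hs]
    rw [h1]
    have h2 : ∫ t in Set.Ioc a s, ‖(c-s) ^ p * ((s-t) ^ q * w t)‖
        ≤ ∫ t in Set.Ioc a s, (c-s) ^ p * M * (s-t) ^ q := by
      apply setIntegral_mono_on
      · have := (hslice s hs).norm
        have heq : (fun t => ‖f s t‖) = Set.indicator (Set.Iic s)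
            (fun t => ‖(c-s) ^ p * ((s-t) ^ q * w t)‖) := by
          funext t; rw [hfs s t, norm_indicator_eq_indicator_norm]
        rw [heq, hν, integrable_indicator_iff measurableSet_Iic,
          IntegrableOn, Measure.restrict_restrict measurableSet_Iic, hsub s hs] at this
        exact this
      · exact ((rpow_io q a s hq1 has).const_mul ((c-s) ^ p * M)).congr
          (Filter.Eventually.of_forall fun t => by ring)
      · exact measurableSet_Ioc
      · intro t ht
        have h0cs : (0:ℝ) ≤ (c-s) ^ p := Real.rpow_nonneg (by linarith [hs.2]) p
        have h0st : (0:ℝ) ≤ (s-t) ^ q := Real.rpow_nonneg (by linarith [ht.2]) q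
        rw [norm_mul, norm_mul, Real.norm_of_nonneg h0cs, Real.norm_of_nonneg h0st]
        rw [mul_assoc]
        apply mul_le_mul_of_nonneg_left _ h0cs
        rw [mul_comm M _]
        apply mul_le_mul_of_nonneg_left _ h0st
        exact hM t ⟨ht.1, le_trans ht.2 hs.2⟩
    have h3 : ∫ t in Set.Ioc a s, (c-s) ^ p * M * (s-t) ^ q
        = (c-s) ^ p * M * ((s-a) ^ (q+1) / (q+1)) := by
      rw [← intervalIntegral.integral_of_le has, intervalIntegral.integral_const_mul,
        rpow_val q hq1 a s]
    have h4 : (s-a) ^ (q+1) / (q+1) ≤ (c-a) ^ (q+1) / (q+1) := by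
      apply div_le_div_of_nonneg_right _ (by linarith)
      exact Real.rpow_le_rpow (by linarith [hs.1]) (by linarith [hs.2]) (by linarith)
    have h0cs : (0:ℝ) ≤ (c-s) ^ p := Real.rpow_nonneg (by linarith [hs.2]) p
    calc ∫ t in Set.Ioc a s, ‖(c-s) ^ p * ((s-t) ^ q * w t)‖
          ≤ (c-s) ^ p * M * ((s-a) ^ (q+1) / (q+1)) := by rw [← h3]; exact h2
      _ ≤ (c-s) ^ p * M * ((c-a) ^ (q+1) / (q+1)) :=
          mul_le_mul_of_nonneg_left h4 (mul_nonneg h0cs hM0)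
      _ = (M * ((c-a) ^ (q+1) / (q+1))) * (c-s) ^ p := by ring
  -- integrability of the norm integrals
  have hnorm_int : Integrable (fun s => ∫ t, ‖f s t‖ ∂ν) ν := by
    apply Integrable.mono'
      (((rpow_io p a c hp1 hac.le).const_mul (M * ((c-a) ^ (q+1) / (q+1)))).congr
        (Filter.Eventually.of_forall fun s => rfl))
    · exact hmeas.norm.integral_prod_right'
    · rw [hν, ae_restrict_iff' measurableSet_Ioc]
      apply Filter.Eventually.of_forall
      intro s hs
      rw [Real.norm_of_nonneg (integral_nonneg fun t => norm_nonneg _)]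
      exact hnorm_bound s hs
  have hInt : Integrable (uncurry f) (ν.prod ν) :=
    (integrable_prod_iff hmeas).mpr ⟨hslice_ae, hnorm_int⟩
  -- set identity for the t-slices
  have hsub2 : ∀ t, t ∈ Set.Ioc a c → Set.Ici t ∩ Set.Ioc a c = Set.Icc t c := by
    intro t ht
    ext y
    simp only [Set.mem_inter_iff, Set.mem_Ici, Set.mem_Ioc, Set.mem_Icc]
    constructor
    · rintro ⟨h1, _, h3⟩; exact ⟨h1, h3⟩
    · rintro ⟨h1, h2⟩; exact ⟨h1, lt_of_lt_of_le ht.1 h1, h2⟩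
  have htslice : ∀ t ∈ Set.Ioc a c,
      (∫ s, f s t ∂ν) = (∫ s in t..c, (c-s) ^ p * (s-t) ^ q) * w t := by
    intro t ht
    have : (fun s => f s t) = Set.indicator (Set.Ici t)
        (fun s => (c-s) ^ p * ((s-t) ^ q * w t)) := funext (hft t)
    rw [this, hν, integral_indicator measurableSet_Ici,
      Measure.restrict_restrict measurableSet_Ici, hsub2 t ht,
      integral_Icc_eq_integral_Ioc, ← intervalIntegral.integral_of_le ht.2]
    rw [← intervalIntegral.integral_mul_const]
    apply intervalIntegral.integral_congr
    intro s _
    simp only []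
    ring
  -- main computation
  constructor
  · rw [intervalIntegral.integral_of_le hac.le, intervalIntegral.integral_of_le hac.le]
    have e1 : ∫ s in Set.Ioc a c, ((c-s) ^ p * ∫ t in a..s, (s-t) ^ q * w t)
        = ∫ s, (∫ t, f s t ∂ν) ∂ν := by
      rw [hν]
      apply setIntegral_congr_fun measurableSet_Ioc
      intro s hs
      exact (hslice_val s hs).symm
    have e2 : ∫ t in Set.Ioc a c, ((∫ s in t..c, (c-s) ^ p * (s-t) ^ q) * w t)
        = ∫ t, (∫ s, f s t ∂ν) ∂ν := by
      rw [hν]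
      apply setIntegral_congr_fun measurableSet_Ioc
      intro t ht
      exact (htslice t ht).symm
    rw [e1, e2]
    exact integral_integral_swap hInt
  · have := hInt.integral_prod_left
    refine (this.congr ?_ : Integrable _ ν)
    rw [hν]
    exact (ae_restrict_iff' measurableSet_Ioc).mpr
      (Filter.Eventually.of_forall fun s hs => hslice_val s hs)



lemma cs_step (μ : ℝ) (hμ0 : 0 < μ) (hμ1 : μ < 1) (a x : ℝ) (hax : a < x) (D : ℝ → ℝ)
    (hDm : AEStronglyMeasurable D (volume.restrict (Set.Ioc a x)))
    (hDint : IntegrableOn (fun s => (x-s) ^ (μ-1) * D s ^ 2) (Set.Ioc a x) volume) :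
    (∫ s in a..x, (x-s) ^ (μ-1) * D s) ^ 2
      ≤ ((x-a) ^ μ / μ) * ∫ s in a..x, (x-s) ^ (μ-1) * D s ^ 2 := by
  set ρ := volume.restrict (Set.Ioc a x) with hρ
  set f : ℝ → ℝ := fun s => (x-s) ^ ((μ-1)/2) with hfdef
  set g : ℝ → ℝ := fun s => f s * |D s| with hgdef
  have hxs : ∀ s ∈ Set.Ioc a x, (0:ℝ) ≤ x - s := fun s hs => by linarith [hs.2]
  have hff : ∀ s ∈ Set.Ioc a x, f s * f s = (x-s) ^ (μ-1) := by
    intro s hs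
    rw [hfdef]
    rw [← Real.rpow_add' (hxs s hs) (by ring_nf; linarith)]
    norm_num
  have hae : ∀ᵐ s ∂ρ, s ∈ Set.Ioc a x := by
    rw [hρ, ae_restrict_iff' measurableSet_Ioc]
    exact Filter.Eventually.of_forall fun s hs => hs
  have hfm : AEStronglyMeasurable f ρ := (Measurable.aestronglyMeasurable (by fun_prop))
  have hgm : AEStronglyMeasurable g ρ := hfm.mul hDm.norm
  -- Memℒp hypotheses
  have hint_fsq : Integrable (fun s => f s ^ 2) ρ := by
    apply (rpow_io (μ-1) a x (by linarith) hax.le).congr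
    filter_upwards [hae] with s hs
    rw [pow_two, hff s hs]
  have hint_gsq : Integrable (fun s => g s ^ 2) ρ := by
    apply hDint.congr
    filter_upwards [hae] with s hs
    rw [hgdef]
    simp only []
    rw [mul_pow, pow_two (f s), hff s hs, sq_abs]
  have hp2 : (ENNReal.ofReal 2) = (2 : ℝ≥0∞) := by norm_num
  have hmemf : MemLp f (ENNReal.ofReal 2) ρ := by
    rw [hp2]; exact (memLp_two_iff_integrable_sq hfm).mpr hint_fsq
  have hmemg : MemLp g (ENNReal.ofReal 2) ρ := by
    rw [hp2]; exact (memLp_two_iff_integrable_sq hgm).mpr hint_gsq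
  have hconj : Real.HolderConjugate 2 2 := ⟨by norm_num, by norm_num, by norm_num⟩
  have hfnn : ∀ᵐ s ∂ρ, 0 ≤ f s := by
    filter_upwards [hae] with s hs
    exact Real.rpow_nonneg (hxs s hs) _
  have hgnn : ∀ᵐ s ∂ρ, 0 ≤ g s := by
    filter_upwards [hfnn] with s hs
    exact mul_nonneg hs (abs_nonneg _)
  have hholder := integral_mul_le_Lp_mul_Lq_of_nonneg hconj hfnn hgnn hmemf hmemg
  -- identify the three integrals
  have hA : ∫ s, f s ^ (2:ℝ) ∂ρ = (x-a) ^ μ / μ := by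
    have : ∫ s, f s ^ (2:ℝ) ∂ρ = ∫ s in a..x, (x-s) ^ (μ-1) := by
      rw [intervalIntegral.integral_of_le hax.le, hρ]
      apply setIntegral_congr_fun measurableSet_Ioc
      intro s hs
      simp only []
      rw [show (2:ℝ) = ((2:ℕ):ℝ) by norm_num, Real.rpow_natCast, pow_two, hff s hs]
    rw [this, rpow_val (μ-1) (by linarith) a x, show μ-1+1 = μ by ring]
  have hB : ∫ s, g s ^ (2:ℝ) ∂ρ = ∫ s in a..x, (x-s) ^ (μ-1) * D s ^ 2 := by
    rw [intervalIntegral.integral_of_le hax.le, hρ]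
    apply setIntegral_congr_fun measurableSet_Ioc
    intro s hs
    simp only []
    rw [show (2:ℝ) = ((2:ℕ):ℝ) by norm_num, Real.rpow_natCast, hgdef]
    simp only []
    rw [mul_pow, pow_two (f s), hff s hs, sq_abs]
  have hI : |∫ s in a..x, (x-s) ^ (μ-1) * D s| ≤ ∫ s, f s * g s ∂ρ := by
    refine le_trans (intervalIntegral.abs_integral_le_integral_abs hax.le) (le_of_eq ?_)
    rw [intervalIntegral.integral_of_le hax.le, hρ]
    apply setIntegral_congr_fun measurableSet_Ioc
    intro s hs
    rw [hgdef]
    simp only []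
    rw [← mul_assoc, hff s hs, abs_mul,
      abs_of_nonneg (Real.rpow_nonneg (hxs s hs) _)]
  have hAnn : (0:ℝ) ≤ (x-a) ^ μ / μ :=
    div_nonneg (Real.rpow_nonneg (by linarith) _) hμ0.le
  have hBnn : (0:ℝ) ≤ ∫ s in a..x, (x-s) ^ (μ-1) * D s ^ 2 :=
    intervalIntegral.integral_nonneg hax.le fun t ht =>
      mul_nonneg (Real.rpow_nonneg (by linarith [ht.2]) _) (sq_nonneg _)
  have hR : (∫ s, f s ^ (2:ℝ) ∂ρ) ^ (1/(2:ℝ)) * (∫ s, g s ^ (2:ℝ) ∂ρ) ^ (1/(2:ℝ))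
      = Real.sqrt ((x-a) ^ μ / μ) * Real.sqrt (∫ s in a..x, (x-s) ^ (μ-1) * D s ^ 2) := by
    rw [hA, ← hB, Real.sqrt_eq_rpow, Real.sqrt_eq_rpow]
  calc (∫ s in a..x, (x-s) ^ (μ-1) * D s) ^ 2
      = |∫ s in a..x, (x-s) ^ (μ-1) * D s| ^ 2 := (sq_abs _).symm
    _ ≤ (Real.sqrt ((x-a) ^ μ / μ) * Real.sqrt (∫ s in a..x, (x-s) ^ (μ-1) * D s ^ 2)) ^ 2 := by
        apply pow_le_pow_left₀ (abs_nonneg _)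
        exact le_trans hI (le_trans hholder (le_of_eq hR))
    _ = ((x-a) ^ μ / μ) * ∫ s in a..x, (x-s) ^ (μ-1) * D s ^ 2 := by
        rw [mul_pow, Real.sq_sqrt hAnn, Real.sq_sqrt hBnn]



lemma pc_inversion (μ : ℝ) (hμ0 : 0 < μ) (hμ1 : μ < 1)
    (a b : ℝ) (hab : a < b) (u u' : ℝ → ℝ)
    (hu : ∀ x ∈ Set.Icc a b, HasDerivAt u (u' x) x)
    (hu' : ContinuousOn u' (Set.Icc a b))
    (hua : u a = 0)
    (D : ℝ → ℝ)
    (hD : ∀ x, D x = (1 / Real.Gamma (1 - μ)) * ∫ s in a..x, u' s * (x - s) ^ (-μ))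
    (M : ℝ) (hM : ∀ t ∈ Set.Icc a b, |u' t| ≤ M)
    (x : ℝ) (hx : x ∈ Set.Ioc a b) :
    ∫ s in a..x, (x-s) ^ (μ-1) * D s = Real.Gamma μ * u x := by
  have hG1 : 0 < Real.Gamma (1-μ) := Real.Gamma_pos_of_pos (by linarith)
  have hGμ : 0 < Real.Gamma μ := Real.Gamma_pos_of_pos hμ0
  have hsub : Set.Ioc a x ⊆ Set.Icc a b := fun t ht => ⟨ht.1.le, le_trans ht.2 hx.2⟩
  have hw : AEStronglyMeasurable u' (volume.restrict (Set.Ioc a x)) :=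
    (hu'.mono hsub).aestronglyMeasurable measurableSet_Ioc
  obtain ⟨hswap, -⟩ := tri_swap a x (μ-1) (-μ) hx.1 (by linarith) (by linarith) u' hw M
    (fun t ht => hM t (hsub ht))
  -- rewrite LHS of hswap using D
  have hL : (∫ s in a..x, (x-s) ^ (μ-1) * ∫ t in a..s, (s-t) ^ (-μ) * u' t)
      = Real.Gamma (1-μ) * ∫ s in a..x, (x-s) ^ (μ-1) * D s := by
    rw [← intervalIntegral.integral_const_mul]
    apply intervalIntegral.integral_congr
    intro s _
    simp only []
    rw [hD s]
    have : ∫ t in a..s, (s-t) ^ (-μ) * u' t = ∫ t in a..s, u' t * (s-t) ^ (-μ) := by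
      apply intervalIntegral.integral_congr; intro t _; simp only []; ring
    rw [this]
    field_simp
  -- rewrite RHS of hswap using beta
  have hR : (∫ t in a..x, (∫ s in t..x, (x-s) ^ (μ-1) * (s-t) ^ (-μ)) * u' t)
      = Real.Gamma μ * Real.Gamma (1-μ) * ∫ t in a..x, u' t := by
    rw [← intervalIntegral.integral_const_mul]
    rw [intervalIntegral.integral_of_le hx.1.le, intervalIntegral.integral_of_le hx.1.le]
    apply setIntegral_congr_ae measurableSet_Ioc
    have hne : ∀ᵐ (t : ℝ) ∂volume, t ≠ x := by
      rw [ae_iff]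
      have : {t : ℝ | ¬ t ≠ x} = {x} := by ext t; simp
      rw [this]
      exact measure_singleton x
    filter_upwards [hne] with t htx ht
    rw [beta_tx μ hμ0 hμ1 (beta_aux μ hμ0 hμ1) t x (lt_of_le_of_ne ht.2 htx)]
  have hFTC : ∫ t in a..x, u' t = u x := by
    have : ∫ t in a..x, u' t = u x - u a := by
      apply intervalIntegral.integral_eq_sub_of_hasDerivAt
      · intro y hy
        rw [Set.uIcc_of_le hx.1.le] at hy
        exact hu y ⟨hy.1, le_trans hy.2 hx.2⟩
      · apply ContinuousOn.intervalIntegrable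
        apply hu'.mono
        rw [Set.uIcc_of_le hx.1.le]
        exact fun t ht => ⟨ht.1, le_trans ht.2 hx.2⟩
    rw [this, hua, sub_zero]
  rw [hL, hR, hFTC] at hswap
  have := mul_left_cancel₀ (ne_of_gt hG1) (by linarith [hswap] : Real.Gamma (1-μ) * (∫ s in a..x, (x-s) ^ (μ-1) * D s) = Real.Gamma (1-μ) * (Real.Gamma μ * u x))
  exact this

theorem fractional_poincare_caputo (μ : ℝ) (hμ0 : 0 < μ) (hμ1 : μ < 1)
    (a b : ℝ) (hab : a < b) (u u' : ℝ → ℝ)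
    (hu : ∀ x ∈ Set.Icc a b, HasDerivAt u (u' x) x)
    (hu' : ContinuousOn u' (Set.Icc a b))
    (hua : u a = 0)
    (D : ℝ → ℝ)
    (hD : ∀ x, D x = (1 / Real.Gamma (1 - μ)) * ∫ s in a..x, u' s * (x - s) ^ (-μ)) :
    Real.sqrt (∫ x in a..b, (u x) ^ 2) ≤
      ((b - a) ^ μ / Real.Gamma (μ + 1)) * Real.sqrt (∫ x in a..b, (D x) ^ 2) := by
  have hG1 : 0 < Real.Gamma (1-μ) := Real.Gamma_pos_of_pos (by linarith)
  have hGμ : 0 < Real.Gamma μ := Real.Gamma_pos_of_pos hμ0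
  have hGμ1 : Real.Gamma (μ+1) = μ * Real.Gamma μ := Real.Gamma_add_one (ne_of_gt hμ0)
  -- bound on u'
  obtain ⟨M, hMn⟩ := isCompact_Icc.exists_bound_of_continuousOn hu'
  have hM : ∀ t ∈ Set.Icc a b, |u' t| ≤ M := fun t ht => by
    have := hMn t ht; rwa [Real.norm_eq_abs] at this
  have hM0 : 0 ≤ M := le_trans (abs_nonneg _) (hM a ⟨le_refl a, hab.le⟩)
  have hu'm : AEStronglyMeasurable u' (volume.restrict (Set.Ioc a b)) :=
    (hu'.mono (Set.Ioc_subset_Icc_self)).aestronglyMeasurable measurableSet_Ioc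
  have hMIoc : ∀ t ∈ Set.Ioc a b, |u' t| ≤ M := fun t ht => hM t (Set.Ioc_subset_Icc_self ht)
  -- integrability and measurability of D on (a, b]
  have hDeq : ∀ s, (1 / Real.Gamma (1-μ)) * ((b-s) ^ (0:ℝ)
      * ∫ t in a..s, (s-t) ^ (-μ) * u' t) = D s := by
    intro s
    rw [Real.rpow_zero, one_mul, hD s]
    congr 1
    apply intervalIntegral.integral_congr
    intro t _
    simp only []
    ring
  have hgint := (tri_swap a b 0 (-μ) hab (by norm_num) (by linarith) u' hu'm M hMIoc).2
  have hDint : IntegrableOn D (Set.Ioc a b) volume := by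
    apply ((hgint.const_mul (1 / Real.Gamma (1-μ))).congr
      (Filter.Eventually.of_forall fun s => hDeq s))
  have hDm : AEStronglyMeasurable D (volume.restrict (Set.Ioc a b)) := hDint.aestronglyMeasurable
  -- pointwise bound on D
  set MD : ℝ := (1 / Real.Gamma (1-μ)) * (M * ((b-a) ^ (1-μ) / (1-μ))) with hMDdef
  have hker : ∀ s ∈ Set.Ioc a b, IntegrableOn (fun t => u' t * (s-t) ^ (-μ)) (Set.Ioc a s) volume := by
    intro s hs
    have hwm : AEStronglyMeasurable u' (volume.restrict (Set.Ioc a s)) :=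
      hu'm.mono_measure (Measure.restrict_mono (Set.Ioc_subset_Ioc_right hs.2) le_rfl)
    have hbd : ∀ᵐ t ∂(volume.restrict (Set.Ioc a s)), ‖u' t‖ ≤ M := by
      rw [ae_restrict_iff' measurableSet_Ioc]
      exact Filter.Eventually.of_forall fun t ht => hM t ⟨ht.1.le, le_trans ht.2 hs.2⟩
    exact (rpow_io (-μ) a s (by linarith) hs.1.le).bdd_mul hwm hbd
  have hMD : ∀ s ∈ Set.Ioc a b, |D s| ≤ MD := by
    intro s hs
    rw [hD s, hMDdef, abs_mul, abs_of_nonneg (by positivity : (0:ℝ) ≤ 1 / Real.Gamma (1-μ))]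
    apply mul_le_mul_of_nonneg_left _ (by positivity)
    calc |∫ t in a..s, u' t * (s-t) ^ (-μ)|
        ≤ ∫ t in a..s, |u' t * (s-t) ^ (-μ)| :=
          intervalIntegral.abs_integral_le_integral_abs hs.1.le
      _ ≤ ∫ t in a..s, M * (s-t) ^ (-μ) := by
          apply intervalIntegral.integral_mono_on hs.1.le
          · exact (intervalIntegrable_iff_integrableOn_Ioc_of_le hs.1.le).mpr (hker s hs).abs
          · exact (intervalIntegrable_iff_integrableOn_Ioc_of_le hs.1.le).mpr
              ((rpow_io (-μ) a s (by linarith) hs.1.le).const_mul M)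
          · intro t ht
            rw [abs_mul, abs_of_nonneg (Real.rpow_nonneg (by linarith [ht.2]) _)]
            exact mul_le_mul_of_nonneg_right (hM t ⟨ht.1, le_trans ht.2 hs.2⟩)
              (Real.rpow_nonneg (by linarith [ht.2]) _)
      _ = M * ((s-a) ^ (1-μ) / (1-μ)) := by
          rw [intervalIntegral.integral_const_mul, rpow_val (-μ) (by linarith) a s,
            show -μ+1 = 1-μ by ring]
      _ ≤ M * ((b-a) ^ (1-μ) / (1-μ)) := by
          apply mul_le_mul_of_nonneg_left _ hM0
          apply div_le_div_of_nonneg_right _ (by linarith)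
          exact Real.rpow_le_rpow (by linarith [hs.1]) (by linarith [hs.2]) (by linarith)
  have hMD0 : 0 ≤ MD := le_trans (abs_nonneg _) (hMD b ⟨hab, le_refl b⟩)
  -- D² integrable on (a,b]
  have hDsq : IntegrableOn (fun s => D s ^ 2) (Set.Ioc a b) volume := by
    have hbd : ∀ᵐ s ∂(volume.restrict (Set.Ioc a b)), ‖D s‖ ≤ MD := by
      rw [ae_restrict_iff' measurableSet_Ioc]
      exact Filter.Eventually.of_forall fun s hs => hMD s hs
    exact (hDint.bdd_mul hDm hbd).congr (Filter.Eventually.of_forall fun s => (sq (D s)).symm)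
  have hDsqb : ∀ t ∈ Set.Ioc a b, |D t ^ 2| ≤ MD ^ 2 := by
    intro t ht
    rw [abs_of_nonneg (sq_nonneg _), ← sq_abs]
    exact pow_le_pow_left₀ (abs_nonneg _) (hMD t ht) 2
  -- second Fubini application
  obtain ⟨hswap2, hWint0⟩ := tri_swap a b 0 (μ-1) hab (by norm_num) (by linarith)
    (fun s => D s ^ 2) hDsq.aestronglyMeasurable (MD^2) hDsqb
  -- clean up
  have hswap2' : (∫ x in a..b, ∫ s in a..x, (x-s) ^ (μ-1) * D s ^ 2)
      = ∫ s in a..b, ((b-s) ^ μ / μ) * D s ^ 2 := by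
    have eL : (∫ x in a..b, (b-x) ^ (0:ℝ) * ∫ s in a..x, (x-s) ^ (μ-1) * D s ^ 2)
        = ∫ x in a..b, ∫ s in a..x, (x-s) ^ (μ-1) * D s ^ 2 := by
      apply intervalIntegral.integral_congr
      intro x _
      simp only []
      rw [Real.rpow_zero, one_mul]
    have eR : (∫ t in a..b, (∫ s in t..b, (b-s) ^ (0:ℝ) * (s-t) ^ (μ-1)) * D t ^ 2)
        = ∫ t in a..b, ((b-t) ^ μ / μ) * D t ^ 2 := by
      apply intervalIntegral.integral_congr
      intro t _
      simp only []
      congr 1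
      have : (∫ s in t..b, (b-s) ^ (0:ℝ) * (s-t) ^ (μ-1)) = ∫ s in t..b, (s-t) ^ (μ-1) := by
        apply intervalIntegral.integral_congr
        intro s _
        simp only []
        rw [Real.rpow_zero, one_mul]
      rw [this, rpow_val2 (μ-1) (by linarith) t b, show μ-1+1 = μ by ring]
    rw [← eL, ← eR, hswap2]
  -- integrability of the inner integral function V
  have hVint : IntegrableOn (fun x => ∫ s in a..x, (x-s) ^ (μ-1) * D s ^ 2)
      (Set.Ioc a b) volume := by
    apply hWint0.congr (Filter.Eventually.of_forall fun x => ?_)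
    simp only []
    rw [Real.rpow_zero, one_mul]
  -- pointwise Cauchy-Schwarz + inversion bound
  have hpt : ∀ x ∈ Set.Ioc a b, (Real.Gamma μ) ^ 2 * u x ^ 2
      ≤ ((b-a) ^ μ / μ) * ∫ s in a..x, (x-s) ^ (μ-1) * D s ^ 2 := by
    intro x hx
    have hDmx : AEStronglyMeasurable D (volume.restrict (Set.Ioc a x)) :=
      hDm.mono_measure (Measure.restrict_mono (Set.Ioc_subset_Ioc_right hx.2) le_rfl)
    have hDintx : IntegrableOn (fun s => (x-s) ^ (μ-1) * D s ^ 2) (Set.Ioc a x) volume := by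
      have hbd : ∀ᵐ s ∂(volume.restrict (Set.Ioc a x)), ‖D s ^ 2‖ ≤ MD ^ 2 := by
        rw [ae_restrict_iff' measurableSet_Ioc]
        exact Filter.Eventually.of_forall fun s hs =>
          hDsqb s ⟨hs.1, le_trans hs.2 hx.2⟩
      have := (rpow_io (μ-1) a x (by linarith) hx.1.le).bdd_mul
        (hDsq.aestronglyMeasurable.mono_measure
          (Measure.restrict_mono (Set.Ioc_subset_Ioc_right hx.2) le_rfl)) hbd
      exact this.congr (Filter.Eventually.of_forall fun s => by ring)
    have hcs := cs_step μ hμ0 hμ1 a x hx.1 D hDmx hDintx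
    have hinv := pc_inversion μ hμ0 hμ1 a b hab u u' hu hu' hua D hD M hM x hx
    have hVnn : 0 ≤ ∫ s in a..x, (x-s) ^ (μ-1) * D s ^ 2 :=
      intervalIntegral.integral_nonneg hx.1.le fun t ht =>
        mul_nonneg (Real.rpow_nonneg (by linarith [ht.2]) _) (sq_nonneg _)
    calc (Real.Gamma μ) ^ 2 * u x ^ 2 = (∫ s in a..x, (x-s) ^ (μ-1) * D s) ^ 2 := by
          rw [hinv]; ring
      _ ≤ ((x-a) ^ μ / μ) * ∫ s in a..x, (x-s) ^ (μ-1) * D s ^ 2 := hcs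
      _ ≤ ((b-a) ^ μ / μ) * ∫ s in a..x, (x-s) ^ (μ-1) * D s ^ 2 := by
          apply mul_le_mul_of_nonneg_right _ hVnn
          apply div_le_div_of_nonneg_right _ hμ0.le
          exact Real.rpow_le_rpow (by linarith [hx.1]) (by linarith [hx.2]) hμ0.le
  -- integrate the pointwise bound
  have hucont : ContinuousOn u (Set.Icc a b) := fun y hy =>
    (hu y hy).continuousAt.continuousWithinAt
  have husq : IntegrableOn (fun x => (Real.Gamma μ) ^ 2 * u x ^ 2) (Set.Ioc a b) volume :=
    ((((hucont.pow 2).const_smul ((Real.Gamma μ) ^ 2)).integrableOn_compact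
      isCompact_Icc).mono_set Set.Ioc_subset_Icc_self).congr
      (Filter.Eventually.of_forall fun x => by simp [smul_eq_mul])
  have key : (∫ x in Set.Ioc a b, (Real.Gamma μ) ^ 2 * u x ^ 2)
      ≤ ∫ x in Set.Ioc a b, ((b-a) ^ μ / μ) * ∫ s in a..x, (x-s) ^ (μ-1) * D s ^ 2 :=
    setIntegral_mono_on husq (hVint.const_mul _) measurableSet_Ioc hpt
  -- final chain
  set P := ∫ x in a..b, u x ^ 2 with hPdef
  set Q := ∫ x in a..b, D x ^ 2 with hQdef
  have hQnn : 0 ≤ Q :=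
    intervalIntegral.integral_nonneg hab.le fun t _ => sq_nonneg _
  have hlast : (∫ s in a..b, ((b-s) ^ μ / μ) * D s ^ 2) ≤ ((b-a) ^ μ / μ) * Q := by
    rw [hQdef, ← intervalIntegral.integral_const_mul,
      intervalIntegral.integral_of_le hab.le, intervalIntegral.integral_of_le hab.le]
    apply setIntegral_mono_on
    · have hbd : ∀ᵐ s ∂(volume.restrict (Set.Ioc a b)), ‖(b-s) ^ μ / μ‖ ≤ (b-a) ^ μ / μ := by
        rw [ae_restrict_iff' measurableSet_Ioc]
        apply Filter.Eventually.of_forall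
        intro s hs
        rw [Real.norm_of_nonneg (div_nonneg (Real.rpow_nonneg (by linarith [hs.2]) _) hμ0.le)]
        apply div_le_div_of_nonneg_right _ hμ0.le
        exact Real.rpow_le_rpow (by linarith [hs.2]) (by linarith [hs.1]) hμ0.le
      exact hDsq.bdd_mul (Measurable.aestronglyMeasurable (by fun_prop)) hbd
    · exact hDsq.const_mul _
    · exact measurableSet_Ioc
    · intro s hs
      apply mul_le_mul_of_nonneg_right _ (sq_nonneg _)
      apply div_le_div_of_nonneg_right _ hμ0.le
      exact Real.rpow_le_rpow (by linarith [hs.2]) (by linarith [hs.1]) hμ0.le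
  have hchain : (Real.Gamma μ) ^ 2 * P ≤ ((b-a) ^ μ / μ) ^ 2 * Q := by
    calc (Real.Gamma μ) ^ 2 * P
        = ∫ x in Set.Ioc a b, (Real.Gamma μ) ^ 2 * u x ^ 2 := by
          rw [hPdef, ← intervalIntegral.integral_const_mul,
            intervalIntegral.integral_of_le hab.le]
      _ ≤ ∫ x in Set.Ioc a b, ((b-a) ^ μ / μ) * ∫ s in a..x, (x-s) ^ (μ-1) * D s ^ 2 := key
      _ = ((b-a) ^ μ / μ) * ∫ x in a..b, ∫ s in a..x, (x-s) ^ (μ-1) * D s ^ 2 := by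
          rw [intervalIntegral.integral_of_le hab.le, ← integral_const_mul]
      _ = ((b-a) ^ μ / μ) * ∫ s in a..b, ((b-s) ^ μ / μ) * D s ^ 2 := by rw [hswap2']
      _ ≤ ((b-a) ^ μ / μ) * (((b-a) ^ μ / μ) * Q) := by
          apply mul_le_mul_of_nonneg_left hlast
          exact div_nonneg (Real.rpow_nonneg (by linarith) _) hμ0.le
      _ = ((b-a) ^ μ / μ) ^ 2 * Q := by ring
  set C : ℝ := (b-a) ^ μ / Real.Gamma (μ+1) with hCdef
  have hC0 : 0 ≤ C := div_nonneg (Real.rpow_nonneg (by linarith) _)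
    (by rw [hGμ1]; positivity)
  have hPC : P ≤ C ^ 2 * Q := by
    have he : (Real.Gamma μ) ^ 2 * (C ^ 2 * Q) = ((b-a) ^ μ / μ) ^ 2 * Q := by
      rw [hCdef, hGμ1]
      field_simp
    nlinarith [hchain, he, mul_pos hGμ hGμ, sq_nonneg (Real.Gamma μ)]
  calc Real.sqrt P ≤ Real.sqrt (C ^ 2 * Q) := Real.sqrt_le_sqrt hPC
    _ = C * Real.sqrt Q := by
        rw [Real.sqrt_mul (sq_nonneg C), Real.sqrt_sq hC0]
end
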